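/- arXiv:1710.09951 — 4 statements merged into one kernel-verified Lean document; each statement's English description precedes it below -/
import Mathlib

section
/- Let A be a countable set with a reflexive, transitive order ≤, such that every upwards-closed subset of A either has a minimum element or equals A. Let μ₁, μ₂ be sub-distributions over A of equal weight. Then μ₂ stochastically dominates μ₁ (i.e., μ₁({a : k ≤ a}) ≤ μ₂({a : k ≤ a}) for every k ∈ A) if and only if there exists a coupling of (μ₁, μ₂) with support contained in {(a₁,a₂) : a₁ ≤ a₂}. -/
open scoped ENNReal

noncomputable section

/-- A discrete sub-distribution: total mass at most 1. -/
def IsSubDist {A : Type*} (μ : A → ℝ≥0∞) : Prop := ∑' a, μ a ≤ 1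

/-- Mass of a set under `μ`. -/
def setSum {A : Type*} (μ : A → ℝ≥0∞) (S : Set A) : ℝ≥0∞ := ∑' a : S, μ (a : A)

/-- `μ` is a coupling of `(μ₁, μ₂)`: a joint sub-distribution with the given marginals. -/
def IsCoupling {A₁ A₂ : Type*} (μ : A₁ × A₂ → ℝ≥0∞)
    (μ₁ : A₁ → ℝ≥0∞) (μ₂ : A₂ → ℝ≥0∞) : Prop :=
  IsSubDist μ ∧ (∀ a₁, ∑' a₂, μ (a₁, a₂) = μ₁ a₁) ∧ (∀ a₂, ∑' a₁, μ (a₁, a₂) = μ₂ a₂)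

/-- Image of a set under a relation. -/
def relImage {A₁ A₂ : Type*} (R : Set (A₁ × A₂)) (S : Set A₁) : Set A₂ :=
  {a₂ | ∃ a₁ ∈ S, (a₁, a₂) ∈ R}

/-- `R⋆ = R ∪ (A₁ × {⋆}) ∪ ({⋆} × A₂)`, with `⋆` modelled by `none`. -/
def starRel {A₁ A₂ : Type*} (R : Set (A₁ × A₂)) : Set (Option A₁ × Option A₂) :=
  {p | match p with
       | (some a₁, some a₂) => (a₁, a₂) ∈ R
       | (some _, none) => True
       | (none, some _) => True
       | (none, none) => False}

/-- `(ε, δ)`-approximate `R`-lifting of `(μ₁, μ₂)`, witnessed by two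
sub-distributions over `A₁⋆ × A₂⋆` with marginal, support, and ε-distance conditions. -/
def ApproxLift {A₁ A₂ : Type*} (ε δ : ℝ) (R : Set (A₁ × A₂))
    (μ₁ : A₁ → ℝ≥0∞) (μ₂ : A₂ → ℝ≥0∞) : Prop :=
  ∃ μL μR : Option A₁ × Option A₂ → ℝ≥0∞,
    IsSubDist μL ∧ IsSubDist μR ∧
    (∀ a₁, ∑' o, μL (some a₁, o) = μ₁ a₁) ∧ (∀ o, μL (none, o) = 0) ∧
    (∀ a₂, ∑' o, μR (o, some a₂) = μ₂ a₂) ∧ (∀ o, μR (o, none) = 0) ∧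
    {p | μL p ≠ 0} ⊆ starRel R ∧ {p | μR p ≠ 0} ⊆ starRel R ∧
    ∀ S : Set (Option A₁ × Option A₂),
      setSum μL S ≤ ENNReal.ofReal (Real.exp ε) * setSum μR S + ENNReal.ofReal δ

/-!
A coupling supported on `≤` carries the `μ₁`-mass of an upper set into that same set, which
gives domination. Conversely, when `≤` is total, lay out `μ₁` and `μ₂` as consecutive intervals
of `(0, ∑ μ₁]`, larger elements first (ties broken by an enumeration of `A`), and couple `x` with
`y` by the length of the overlap of their intervals: domination on the upper set
`{z | ¬ z ≤ y}` shows that the interval of `x` ends before that of `y` starts unless `x ≤ y`.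

When `a` and `b` are incomparable, `Ici a ∪ Ici b` has no least element and hence is all of
`A`. So `A` splits into the classes `Ici a \ Ici b` of `a` and `Ici b \ Ici a` of `b`, and the
totally preordered set `C = Ici a ∩ Ici b` lying above both. Domination on `Ici b` and `Ici a`
gives `μ₂ ≤ μ₁` on each class, so there `μ₂` is matched with part of `μ₁` by a product
coupling; what is left of `μ₁`, and `μ₂` on `C`, are coupled by the interval construction for
the total preorder that collapses everything outside `C` to a bottom element.
-/

open Set MeasureTheory Function

section SetSum

variable {X : Type*} (μ : X → ℝ≥0∞)

lemma setSum_eq_tsum_indicator (S : Set X) : setSum μ S = ∑' x, S.indicator μ x :=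
  tsum_subtype S μ

lemma setSum_mono {S T : Set X} (h : S ⊆ T) : setSum μ S ≤ setSum μ T :=
  ENNReal.tsum_mono_subtype μ h

lemma setSum_univ : setSum μ univ = ∑' x, μ x :=
  tsum_univ μ

lemma setSum_le_tsum (S : Set X) : setSum μ S ≤ ∑' x, μ x :=
  (setSum_mono μ (subset_univ S)).trans_eq (setSum_univ μ)

lemma setSum_union {S T : Set X} (h : Disjoint S T) :
    setSum μ (S ∪ T) = setSum μ S + setSum μ T := by
  simp only [setSum_eq_tsum_indicator, indicator_union_of_disjoint h, ENNReal.tsum_add]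

lemma setSum_insert {x : X} {S : Set X} (h : x ∉ S) :
    setSum μ (insert x S) = μ x + setSum μ S := by
  rw [insert_eq, setSum_union μ (disjoint_singleton_left.2 h), setSum, tsum_singleton]

lemma setSum_add_setSum_compl (S : Set X) : setSum μ S + setSum μ Sᶜ = ∑' x, μ x := by
  rw [← setSum_union μ disjoint_compl_right, union_compl_self, setSum_univ]

lemma setSum_congr {μ' : X → ℝ≥0∞} {S : Set X} (h : ∀ x ∈ S, μ x = μ' x) :
    setSum μ S = setSum μ' S :=
  tsum_congr fun x => h x x.2

end SetSum

lemma setSum_compl_le_of_le {X : Type*} {μ₁ μ₂ : X → ℝ≥0∞} (hfin : ∑' x, μ₂ x ≠ ∞)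
    (hw : ∑' x, μ₁ x = ∑' x, μ₂ x) {S : Set X} (h : setSum μ₁ S ≤ setSum μ₂ S) :
    setSum μ₂ Sᶜ ≤ setSum μ₁ Sᶜ := by
  have hS : setSum μ₂ S ≠ ∞ := ne_top_of_le_ne_top hfin (setSum_le_tsum μ₂ S)
  rw [← ENNReal.add_le_add_iff_left hS]
  calc setSum μ₂ S + setSum μ₂ Sᶜ = setSum μ₁ S + setSum μ₁ Sᶜ := by
        rw [setSum_add_setSum_compl, setSum_add_setSum_compl, hw]
    _ ≤ setSum μ₂ S + setSum μ₁ Sᶜ := by gcongr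

section Coupling

variable {X Y : Type*} {μ : X × Y → ℝ≥0∞} {μ₁ : X → ℝ≥0∞} {μ₂ : Y → ℝ≥0∞}

lemma isCoupling_of_marginals (h₁ : IsSubDist μ₁) (hm₁ : ∀ x, ∑' y, μ (x, y) = μ₁ x)
    (hm₂ : ∀ y, ∑' x, μ (x, y) = μ₂ y) : IsCoupling μ μ₁ μ₂ := by
  refine ⟨?_, hm₁, hm₂⟩
  rw [IsSubDist, ENNReal.tsum_prod', tsum_congr hm₁]
  exact h₁

lemma IsCoupling.le_snd (hμ : IsCoupling μ μ₁ μ₂) (x : X) (y : Y) : μ (x, y) ≤ μ₂ y :=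
  hμ.2.2 y ▸ ENNReal.le_tsum (f := fun x => μ (x, y)) x

lemma setSum_le_setSum_relImage (hμ : IsCoupling μ μ₁ μ₂) {R : Set (X × Y)}
    (hR : {p | μ p ≠ 0} ⊆ R) (S : Set X) : setSum μ₁ S ≤ setSum μ₂ (relImage R S) := by
  have hle : ∀ x y, S.indicator (fun x => μ (x, y)) x ≤
      (relImage R S).indicator (fun y => μ (x, y)) y := by
    intro x y
    by_cases hx : x ∈ S
    · rw [indicator_of_mem hx]
      by_cases hxy : μ (x, y) = 0
      · simp [hxy]
      · rw [indicator_of_mem (show y ∈ relImage R S from ⟨x, hx, hR hxy⟩)]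
    · simp [hx]
  calc setSum μ₁ S = ∑' x, ∑' y, S.indicator (fun x => μ (x, y)) x := by
        rw [setSum_eq_tsum_indicator]
        refine tsum_congr fun x => ?_
        by_cases hx : x ∈ S <;> simp [hx, hμ.2.1]
    _ ≤ ∑' x, ∑' y, (relImage R S).indicator (fun y => μ (x, y)) y :=
        ENNReal.tsum_le_tsum fun x => ENNReal.tsum_le_tsum (hle x)
    _ = setSum μ₂ (relImage R S) := by
        rw [ENNReal.tsum_comm, setSum_eq_tsum_indicator]
        refine tsum_congr fun y => ?_
        by_cases hy : y ∈ relImage R S <;> simp [hy, hμ.2.2]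

end Coupling

lemma tsum_measure_inter_of_tsum_eq {α ι : Type*} [MeasurableSpace α] [Countable ι]
    {m : Measure α} {T I : Set α} {J : ι → Set α} (hJ : ∀ i, MeasurableSet (J i))
    (hJd : Pairwise (Disjoint on J)) (hJT : ∀ i, J i ⊆ T) (hsum : ∑' i, m (J i) = m T)
    (hT : m T ≠ ∞) (hI : MeasurableSet I) (hIT : I ⊆ T) : ∑' i, m (I ∩ J i) = m I := by
  have hU : MeasurableSet (⋃ i, J i) := .iUnion hJ
  have hnull : m (T \ ⋃ i, J i) = 0 := by
    rw [measure_sdiff (iUnion_subset hJT) hU.nullMeasurableSet, measure_iUnion hJd hJ, hsum,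
      tsub_self]
    rwa [measure_iUnion hJd hJ, hsum]
  rw [← measure_iUnion (fun i j hij => (hJd hij).mono inter_subset_right inter_subset_right)
    fun i => hI.inter (hJ i), ← inter_iUnion, ← add_zero (m (I ∩ _)),
    ← measure_mono_null (sdiff_subset_sdiff_left hIT) hnull, measure_inter_add_sdiff I hU]

section Quantile

variable {B : Type*}

def quantileIoc (s : B → B → Prop) (ν : B → ℝ≥0∞) (x : B) : Set ℝ :=
  Ioc (setSum ν {z | s x z}).toReal (setSum ν (insert x {z | s x z})).toReal

def quantileCoupling (s : B → B → Prop) (ν₁ ν₂ : B → ℝ≥0∞) (p : B × B) : ℝ≥0∞ :=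
  volume (quantileIoc s ν₁ p.1 ∩ quantileIoc s ν₂ p.2)

variable {s : B → B → Prop} {ν : B → ℝ≥0∞}

lemma quantileIoc_subset (hν : ∑' x, ν x ≠ ∞) (x : B) :
    quantileIoc s ν x ⊆ Ioc 0 (∑' x, ν x).toReal :=
  Ioc_subset_Ioc ENNReal.toReal_nonneg (ENNReal.toReal_mono hν (setSum_le_tsum ν _))

lemma quantileCoupling_eq_zero {ν₁ ν₂ : B → ℝ≥0∞} (hν₂ : ∑' x, ν₂ x ≠ ∞) {x y : B}
    (h : setSum ν₁ (insert x {z | s x z}) ≤ setSum ν₂ {z | s y z}) :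
    quantileCoupling s ν₁ ν₂ (x, y) = 0 := by
  have hd : Disjoint (quantileIoc s ν₁ x) (quantileIoc s ν₂ y) :=
    Ioc_disjoint_Ioc_of_le (ENNReal.toReal_mono (ne_top_of_le_ne_top hν₂ (setSum_le_tsum ν₂ _)) h)
  exact (congrArg volume hd.inter_eq).trans measure_empty

variable [IsStrictTotalOrder B s]

lemma volume_quantileIoc (hν : ∑' x, ν x ≠ ∞) (x : B) : volume (quantileIoc s ν x) = ν x := by
  rw [quantileIoc, Real.volume_Ioc, setSum_insert ν (S := {z | s x z}) (irrefl x),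
    ENNReal.toReal_add (ne_top_of_le_ne_top hν (ENNReal.le_tsum x))
      (ne_top_of_le_ne_top hν (setSum_le_tsum ν _)),
    add_sub_cancel_right, ENNReal.ofReal_toReal (ne_top_of_le_ne_top hν (ENNReal.le_tsum x))]

lemma disjoint_quantileIoc_of_rel (hν : ∑' x, ν x ≠ ∞) {x y : B} (h : s x y) :
    Disjoint (quantileIoc s ν y) (quantileIoc s ν x) :=
  Ioc_disjoint_Ioc_of_le <| ENNReal.toReal_mono (ne_top_of_le_ne_top hν (setSum_le_tsum ν _)) <|
    setSum_mono ν <| insert_subset h fun _ hz => trans_of s h hz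

lemma pairwise_disjoint_quantileIoc (hν : ∑' x, ν x ≠ ∞) :
    Pairwise (Disjoint on quantileIoc s ν) := by
  intro x y hxy
  rcases trichotomous_of s x y with h | h | h
  · exact (disjoint_quantileIoc_of_rel hν h).symm
  · exact absurd h hxy
  · exact disjoint_quantileIoc_of_rel hν h

lemma tsum_volume_inter_quantileIoc [Countable B] (hν : ∑' x, ν x ≠ ∞) {I : Set ℝ}
    (hI : MeasurableSet I) (hIT : I ⊆ Ioc 0 (∑' x, ν x).toReal) :
    ∑' y, volume (I ∩ quantileIoc s ν y) = volume I := by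
  refine tsum_measure_inter_of_tsum_eq (fun _ => measurableSet_Ioc)
    (pairwise_disjoint_quantileIoc hν) (quantileIoc_subset hν) ?_ (by simp) hI hIT
  rw [tsum_congr (volume_quantileIoc hν), Real.volume_Ioc, sub_zero, ENNReal.ofReal_toReal hν]

lemma isCoupling_quantileCoupling [Countable B] {ν₁ ν₂ : B → ℝ≥0∞} (h₁ : IsSubDist ν₁)
    (hw : ∑' x, ν₁ x = ∑' x, ν₂ x) : IsCoupling (quantileCoupling s ν₁ ν₂) ν₁ ν₂ := by
  have hfin₁ : ∑' x, ν₁ x ≠ ∞ := ne_top_of_le_ne_top ENNReal.one_ne_top h₁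
  have hfin₂ : ∑' x, ν₂ x ≠ ∞ := hw ▸ hfin₁
  refine isCoupling_of_marginals h₁ (fun x => ?_) (fun y => ?_)
  · rw [← volume_quantileIoc (s := s) hfin₁ x]
    exact tsum_volume_inter_quantileIoc (s := s) hfin₂ measurableSet_Ioc
      (hw ▸ quantileIoc_subset hfin₁ x)
  · rw [← volume_quantileIoc (s := s) hfin₂ y]
    simp_rw [quantileCoupling, inter_comm (quantileIoc s ν₁ _)]
    exact tsum_volume_inter_quantileIoc hfin₁ measurableSet_Ioc
      (hw ▸ quantileIoc_subset hfin₂ y)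

end Quantile

lemma exists_isStrictTotalOrder_refining {B : Type*} [Countable B] (r : B → B → Prop)
    [IsTrans B r] [Std.Total r] :
    ∃ s : B → B → Prop, IsStrictTotalOrder B s ∧ (∀ x y, s x y → r x y) ∧
      ∀ x y, ¬ r y x → s x y := by
  obtain ⟨e, he⟩ := exists_injective_nat B
  refine ⟨fun x y => r x y ∧ (¬ r y x ∨ e x < e y), ?_, fun x y h => h.1,
    fun x y h => ⟨(total_of r x y).resolve_right h, .inl h⟩⟩
  refine { trichotomous := fun x y hxy hyx => ?_, irrefl := ?_, trans := ?_ }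
  · simp only [not_and, not_or, not_not, not_lt] at hxy hyx
    rcases total_of r x y with h | h
    · exact he (le_antisymm (hyx (hxy h).1).2 (hxy h).2)
    · exact he (le_antisymm (hyx h).2 (hxy (hyx h).1).2)
  · rintro x ⟨hxx, h | h⟩
    · exact h hxx
    · exact lt_irrefl _ h
  · rintro x y z ⟨hxy, h₁⟩ ⟨hyz, h₂⟩
    refine ⟨trans_of r hxy hyz, ?_⟩
    by_cases hzx : r z x
    · exact .inr ((h₁.resolve_left (not_not.2 (trans_of r hyz hzx))).trans
        (h₂.resolve_left (not_not.2 (trans_of r hzx hxy))))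
    · exact .inl hzx

theorem exists_isCoupling_of_total {B : Type*} [Countable B] (r : B → B → Prop) [IsTrans B r]
    [Std.Total r] {μ₁ μ₂ : B → ℝ≥0∞} (h₁ : IsSubDist μ₁) (hw : ∑' x, μ₁ x = ∑' x, μ₂ x)
    (hdom : ∀ V : Set B, (∀ ⦃x y⦄, r x y → x ∈ V → y ∈ V) → setSum μ₁ V ≤ setSum μ₂ V) :
    ∃ μ : B × B → ℝ≥0∞, IsCoupling μ μ₁ μ₂ ∧ {p | μ p ≠ 0} ⊆ {p | r p.1 p.2} := by
  obtain ⟨s, _, hsr, hrs⟩ := exists_isStrictTotalOrder_refining r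
  have hfin : ∑' x, μ₂ x ≠ ∞ := hw ▸ ne_top_of_le_ne_top ENNReal.one_ne_top h₁
  refine ⟨quantileCoupling s μ₁ μ₂, isCoupling_quantileCoupling h₁ hw, ?_⟩
  rintro ⟨x, y⟩ hxy
  by_contra hr
  have hV : ∀ ⦃u v⦄, r u v → u ∈ {z | ¬ r z y} → v ∈ {z | ¬ r z y} :=
    fun u v huv hu hv => hu (trans_of r huv hv)
  refine hxy (quantileCoupling_eq_zero hfin ?_)
  calc setSum μ₁ (insert x {z | s x z}) ≤ setSum μ₁ {z | ¬ r z y} :=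
        setSum_mono μ₁ <| insert_subset hr fun z hz hzy => hr (trans_of r (hsr _ _ hz) hzy)
    _ ≤ setSum μ₂ {z | ¬ r z y} := hdom _ hV
    _ ≤ setSum μ₂ {z | s y z} := setSum_mono μ₂ fun z hz => hrs y z hz

section Residual

variable {X Y : Type*} {μ₁ : X → ℝ≥0∞} {μ₂ : Y → ℝ≥0∞} {p : X × Y → ℝ≥0∞}

lemma IsCoupling.add_residual {κ : X × Y → ℝ≥0∞} (h₁ : IsSubDist μ₁)
    (hp₁ : ∀ x, ∑' y, p (x, y) ≤ μ₁ x) (hp₂ : ∀ y, ∑' x, p (x, y) ≤ μ₂ y)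
    (hκ : IsCoupling κ (fun x => μ₁ x - ∑' y, p (x, y)) (fun y => μ₂ y - ∑' x, p (x, y))) :
    IsCoupling (p + κ) μ₁ μ₂ := by
  refine isCoupling_of_marginals h₁ (fun x => ?_) (fun y => ?_)
  · rw [Pi.add_def, ENNReal.tsum_add, hκ.2.1 x, add_tsub_cancel_of_le (hp₁ x)]
  · rw [Pi.add_def, ENNReal.tsum_add, hκ.2.2 y, add_tsub_cancel_of_le (hp₂ y)]

lemma tsum_sub_marginal_eq (hfin : ∑' x, μ₁ x ≠ ∞) (hw : ∑' x, μ₁ x = ∑' y, μ₂ y)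
    (hp₁ : ∀ x, ∑' y, p (x, y) ≤ μ₁ x) (hp₂ : ∀ y, ∑' x, p (x, y) ≤ μ₂ y) :
    ∑' x, (μ₁ x - ∑' y, p (x, y)) = ∑' y, (μ₂ y - ∑' x, p (x, y)) := by
  have hP : ∑' x, ∑' y, p (x, y) ≠ ∞ := ne_top_of_le_ne_top hfin (ENNReal.tsum_le_tsum hp₁)
  rw [← ENNReal.add_left_inj hP]
  calc ∑' x, (μ₁ x - ∑' y, p (x, y)) + ∑' x, ∑' y, p (x, y) = ∑' x, μ₁ x := by
        rw [← ENNReal.tsum_add]; exact tsum_congr fun x => tsub_add_cancel_of_le (hp₁ x)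
    _ = ∑' y, (μ₂ y - ∑' x, p (x, y)) + ∑' y, ∑' x, p (x, y) := by
        rw [hw, ← ENNReal.tsum_add]; exact tsum_congr fun y => (tsub_add_cancel_of_le (hp₂ y)).symm
    _ = ∑' y, (μ₂ y - ∑' x, p (x, y)) + ∑' x, ∑' y, p (x, y) := by rw [ENNReal.tsum_comm]

end Residual

section Block

variable {X : Type*} (μ₁ μ₂ : X → ℝ≥0∞) (D : Set X)

def blockCoupling (p : X × X) : ℝ≥0∞ :=
  D.indicator μ₁ p.1 * D.indicator μ₂ p.2 / setSum μ₁ D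

variable {μ₁ μ₂ D}

lemma mem_of_blockCoupling_ne_zero {x y : X} (h : blockCoupling μ₁ μ₂ D (x, y) ≠ 0) :
    x ∈ D ∧ y ∈ D := by
  by_contra hxy
  rcases not_and_or.1 hxy with hx | hy
  · simp [blockCoupling, hx] at h
  · simp [blockCoupling, hy] at h

lemma tsum_blockCoupling_fst_le (hD : setSum μ₂ D ≤ setSum μ₁ D) (x : X) :
    ∑' y, blockCoupling μ₁ μ₂ D (x, y) ≤ D.indicator μ₁ x := by
  calc ∑' y, blockCoupling μ₁ μ₂ D (x, y)
        = D.indicator μ₁ x * (setSum μ₂ D / setSum μ₁ D) := by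
          simp only [blockCoupling, div_eq_mul_inv, mul_assoc, ENNReal.tsum_mul_left,
            ENNReal.tsum_mul_right, setSum_eq_tsum_indicator]
    _ ≤ D.indicator μ₁ x * 1 := by
          gcongr; exact ENNReal.div_le_of_le_mul (by rwa [one_mul])
    _ = D.indicator μ₁ x := mul_one _

lemma tsum_blockCoupling_snd (hD : setSum μ₂ D ≤ setSum μ₁ D) (hfin : setSum μ₁ D ≠ ∞) (y : X) :
    ∑' x, blockCoupling μ₁ μ₂ D (x, y) = D.indicator μ₂ y := by
  have hsum : ∑' x, blockCoupling μ₁ μ₂ D (x, y) =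
      setSum μ₁ D * (D.indicator μ₂ y / setSum μ₁ D) := by
    simp only [blockCoupling, mul_div_assoc, ENNReal.tsum_mul_right, setSum_eq_tsum_indicator]
  rcases eq_or_ne (setSum μ₁ D) 0 with h0 | h0
  · have hy : D.indicator μ₂ y = 0 := by
      rw [← nonpos_iff_eq_zero, ← h0]
      exact (ENNReal.le_tsum y).trans ((setSum_eq_tsum_indicator μ₂ D).ge.trans hD)
    rw [hsum, h0, hy, zero_mul]
  · rw [hsum, ENNReal.mul_div_cancel h0 hfin]

end Block

section Collapse

variable {A : Type*} [Preorder A]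

def collapseRel (C : Set A) (x y : A) : Prop :=
  x ∉ C ∨ (y ∈ C ∧ x ≤ y)

instance (C : Set A) : IsTrans A (collapseRel C) where
  trans x y z := by
    rintro (hx | ⟨hy, hxy⟩) hyz
    · exact .inl hx
    · rcases hyz with hy' | ⟨hz, hyz⟩
      · exact absurd hy hy'
      · exact .inr ⟨hz, hxy.trans hyz⟩

lemma collapseRel_total {C : Set A} (hC : ∀ x ∈ C, ∀ y ∈ C, x ≤ y ∨ y ≤ x) :
    Std.Total (collapseRel C) where
  total x y := by
    by_cases hx : x ∈ C
    · by_cases hy : y ∈ C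
      · exact (hC x hx y hy).imp (fun h => .inr ⟨hy, h⟩) fun h => .inr ⟨hx, h⟩
      · exact .inr (.inl hy)
    · exact .inl (.inl hx)

lemma setSum_le_of_collapseRel_upper {C : Set A} (hC : IsUpperSet C) {μ₁ μ₂ ν₁ : A → ℝ≥0∞}
    (hν : ∀ x ∈ C, ν₁ x = μ₁ x) (hw : ∑' x, ν₁ x = ∑' x, C.indicator μ₂ x)
    (hdom : ∀ V, IsUpperSet V → setSum μ₁ V ≤ setSum μ₂ V) {V : Set A}
    (hV : ∀ ⦃x y⦄, collapseRel C x y → x ∈ V → y ∈ V) :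
    setSum ν₁ V ≤ setSum (C.indicator μ₂) V := by
  by_cases hVC : V ⊆ C
  · have hVup : IsUpperSet V := fun x y hxy hx => hV (.inr ⟨hC hxy (hVC hx), hxy⟩) hx
    calc setSum ν₁ V = setSum μ₁ V := setSum_congr ν₁ fun x hx => hν x (hVC hx)
      _ ≤ setSum μ₂ V := hdom V hVup
      _ = setSum (C.indicator μ₂) V :=
          setSum_congr μ₂ fun x hx => (indicator_of_mem (hVC hx) μ₂).symm
  · obtain ⟨v, hv, hvC⟩ := not_subset.1 hVC
    rw [eq_univ_of_forall fun y => hV (.inl hvC) hv, setSum_univ, setSum_univ, hw]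

theorem exists_isCoupling_of_partialCoupling [Countable A] {C : Set A} (hCup : IsUpperSet C)
    (hCtot : ∀ x ∈ C, ∀ y ∈ C, x ≤ y ∨ y ≤ x) (hCbelow : ∀ x ∉ C, ∀ y ∈ C, x ≤ y)
    {μ₁ μ₂ : A → ℝ≥0∞} (h₁ : IsSubDist μ₁) (hw : ∑' x, μ₁ x = ∑' x, μ₂ x)
    (hdom : ∀ V, IsUpperSet V → setSum μ₁ V ≤ setSum μ₂ V) {p : A × A → ℝ≥0∞}
    (hp₁ : ∀ x, ∑' y, p (x, y) ≤ Cᶜ.indicator μ₁ x) (hp₂ : ∀ y, ∑' x, p (x, y) = Cᶜ.indicator μ₂ y)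
    (hp : {q | p q ≠ 0} ⊆ {q | q.1 ≤ q.2}) :
    ∃ μ : A × A → ℝ≥0∞, IsCoupling μ μ₁ μ₂ ∧ {q | μ q ≠ 0} ⊆ {q | q.1 ≤ q.2} := by
  have hp₁' : ∀ x, ∑' y, p (x, y) ≤ μ₁ x := fun x => (hp₁ x).trans (indicator_le_self _ _ x)
  have hp₂' : ∀ y, ∑' x, p (x, y) ≤ μ₂ y := fun y => (hp₂ y).trans_le (indicator_le_self _ _ y)
  have hν₁ : ∀ x ∈ C, μ₁ x - ∑' y, p (x, y) = μ₁ x := fun x hx => by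
    rw [nonpos_iff_eq_zero.1 ((hp₁ x).trans_eq (indicator_of_notMem (not_not.2 hx) μ₁)),
      tsub_zero]
  have hν₂ : (fun y => μ₂ y - ∑' x, p (x, y)) = C.indicator μ₂ := funext fun y => by
    by_cases hy : y ∈ C <;> simp [hp₂, hy]
  have hres := tsum_sub_marginal_eq (ne_top_of_le_ne_top ENNReal.one_ne_top h₁) hw hp₁' hp₂'
  have := collapseRel_total hCtot
  obtain ⟨κ, hκ, hκC⟩ := exists_isCoupling_of_total (collapseRel C)
    ((ENNReal.tsum_le_tsum fun x => tsub_le_self).trans h₁) hres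
    fun V hV => hν₂ ▸ setSum_le_of_collapseRel_upper hCup hν₁ (hν₂ ▸ hres) hdom hV
  refine ⟨p + κ, hκ.add_residual h₁ hp₁' hp₂', ?_⟩
  rintro ⟨x, y⟩ hxy
  by_cases hpxy : p (x, y) = 0
  · have hκxy : κ (x, y) ≠ 0 := by simpa [hpxy] using hxy
    have hy : y ∈ C := by
      by_contra hy
      refine hκxy (nonpos_iff_eq_zero.1 ((hκ.le_snd x y).trans_eq ?_))
      rw [congrFun hν₂ y, indicator_of_notMem hy]
    rcases hκC hκxy with hx | ⟨-, hle⟩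
    · exact hCbelow x hx y hy
    · exact hle
  · exact hp hpxy

end Collapse

def UpperSetsPrincipalOrUniv (A : Type*) [Preorder A] : Prop :=
  ∀ S : Set A, S.Nonempty → IsUpperSet S → (∃ m, S = Ici m) ∨ S = univ

namespace UpperSetsPrincipalOrUniv

variable {A : Type*} [Preorder A] {a b : A}

lemma le_or_le (hA : UpperSetsPrincipalOrUniv A) (hab : ¬ a ≤ b) (hba : ¬ b ≤ a) (z : A) :
    a ≤ z ∨ b ≤ z := by
  rcases hA (Ici a ∪ Ici b) ⟨a, .inl le_rfl⟩ ((isUpperSet_Ici a).union (isUpperSet_Ici b))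
    with ⟨m, hm⟩ | hu
  · have hma : m ≤ a := (hm ▸ Or.inl le_rfl : a ∈ Ici m)
    have hmb : m ≤ b := (hm ▸ Or.inr le_rfl : b ∈ Ici m)
    rcases (hm ▸ le_refl m : m ∈ Ici a ∪ Ici b) with h | h
    · exact absurd (h.trans hmb) hab
    · exact absurd (h.trans hma) hba
  · exact eq_univ_iff_forall.1 hu z

lemma compl_Ici (hA : UpperSetsPrincipalOrUniv A) (hab : ¬ a ≤ b) (hba : ¬ b ≤ a) :
    (Ici b)ᶜ = Ici a \ Ici b :=
  ext fun x => ⟨fun hx => ⟨(hA.le_or_le hab hba x).resolve_right hx, hx⟩, fun hx => hx.2⟩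

lemma compl_Ici_inter_Ici (hA : UpperSetsPrincipalOrUniv A) (hab : ¬ a ≤ b) (hba : ¬ b ≤ a) :
    (Ici a ∩ Ici b)ᶜ = (Ici a \ Ici b) ∪ (Ici b \ Ici a) := by
  ext x
  have := hA.le_or_le hab hba x
  simp only [mem_compl_iff, mem_inter_iff, mem_union, mem_sdiff, mem_Ici]
  tauto

lemma le_of_mem_sdiff (hA : UpperSetsPrincipalOrUniv A) (hab : ¬ a ≤ b) (hba : ¬ b ≤ a) {x : A}
    (hx : x ∈ Ici a \ Ici b) : x ≤ a :=
  (hA.le_or_le (fun hxb => hab (hx.1.trans hxb)) hx.2 a).resolve_right hba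

lemma le_total_of_mem (hA : UpperSetsPrincipalOrUniv A) (hba : ¬ b ≤ a) {x y : A}
    (hx : x ∈ Ici a ∩ Ici b) (hy : y ∈ Ici a ∩ Ici b) : x ≤ y ∨ y ≤ x := by
  by_contra! h
  rcases hA.le_or_le h.1 h.2 a with h' | h'
  · exact hba (hx.2.trans h')
  · exact hba (hy.2.trans h')

lemma setSum_le_of_isUpperSet (hA : UpperSetsPrincipalOrUniv A) {μ₁ μ₂ : A → ℝ≥0∞}
    (hw : ∑' x, μ₁ x = ∑' x, μ₂ x) (hdom : ∀ k, setSum μ₁ (Ici k) ≤ setSum μ₂ (Ici k))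
    {V : Set A} (hV : IsUpperSet V) : setSum μ₁ V ≤ setSum μ₂ V := by
  rcases V.eq_empty_or_nonempty with rfl | hne
  · simp [setSum]
  rcases hA V hne hV with ⟨m, rfl⟩ | rfl
  · exact hdom m
  · rw [setSum_univ, setSum_univ, hw]

theorem exists_isCoupling_of_not_le [Countable A] (hA : UpperSetsPrincipalOrUniv A)
    (hab : ¬ a ≤ b) (hba : ¬ b ≤ a) {μ₁ μ₂ : A → ℝ≥0∞} (h₁ : IsSubDist μ₁)
    (hw : ∑' x, μ₁ x = ∑' x, μ₂ x) (hdom : ∀ V, IsUpperSet V → setSum μ₁ V ≤ setSum μ₂ V) :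
    ∃ μ : A × A → ℝ≥0∞, IsCoupling μ μ₁ μ₂ ∧ {q | μ q ≠ 0} ⊆ {q | q.1 ≤ q.2} := by
  have hfin₁ : ∑' x, μ₁ x ≠ ∞ := ne_top_of_le_ne_top ENNReal.one_ne_top h₁
  have hDfin : ∀ D, setSum μ₁ D ≠ ∞ := fun D => ne_top_of_le_ne_top hfin₁ (setSum_le_tsum μ₁ D)
  have hDa : setSum μ₂ (Ici a \ Ici b) ≤ setSum μ₁ (Ici a \ Ici b) :=
    hA.compl_Ici hab hba ▸ setSum_compl_le_of_le (hw ▸ hfin₁) hw (hdom _ (isUpperSet_Ici b))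
  have hDb : setSum μ₂ (Ici b \ Ici a) ≤ setSum μ₁ (Ici b \ Ici a) :=
    hA.compl_Ici hba hab ▸ setSum_compl_le_of_le (hw ▸ hfin₁) hw (hdom _ (isUpperSet_Ici a))
  have hdisj : Disjoint (Ici a \ Ici b) (Ici b \ Ici a) :=
    disjoint_left.2 fun _ hx hx' => hx.2 hx'.1
  have hCbelow : ∀ x ∉ Ici a ∩ Ici b, ∀ y ∈ Ici a ∩ Ici b, x ≤ y := by
    intro x hx y hy
    rw [← mem_compl_iff, hA.compl_Ici_inter_Ici hab hba] at hx
    rcases hx with hx | hx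
    · exact (hA.le_of_mem_sdiff hab hba hx).trans hy.1
    · exact (hA.le_of_mem_sdiff hba hab hx).trans hy.2
  refine exists_isCoupling_of_partialCoupling ((isUpperSet_Ici a).inter (isUpperSet_Ici b))
    (fun x hx y hy => hA.le_total_of_mem hba hx hy) hCbelow h₁ hw hdom
    (p := blockCoupling μ₁ μ₂ (Ici a \ Ici b) + blockCoupling μ₁ μ₂ (Ici b \ Ici a))
    (fun x => ?_) (fun y => ?_) ?_
  · rw [hA.compl_Ici_inter_Ici hab hba, indicator_union_of_disjoint hdisj, Pi.add_def,
      ENNReal.tsum_add]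
    exact add_le_add (tsum_blockCoupling_fst_le hDa x) (tsum_blockCoupling_fst_le hDb x)
  · rw [hA.compl_Ici_inter_Ici hab hba, indicator_union_of_disjoint hdisj, Pi.add_def,
      ENNReal.tsum_add, tsum_blockCoupling_snd hDa (hDfin _), tsum_blockCoupling_snd hDb (hDfin _)]
  · rintro ⟨x, y⟩ hxy
    rcases add_ne_zero.1 hxy with h | h
    · obtain ⟨hx, hy⟩ := mem_of_blockCoupling_ne_zero h
      exact (hA.le_of_mem_sdiff hab hba hx).trans hy.1
    · obtain ⟨hx, hy⟩ := mem_of_blockCoupling_ne_zero h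
      exact (hA.le_of_mem_sdiff hba hab hx).trans hy.1

end UpperSetsPrincipalOrUniv

theorem stochastic_domination_iff_general {A : Type*} [Countable A] [Preorder A]
    (hmin : ∀ S : Set A, S.Nonempty → (∀ a b, a ∈ S → a ≤ b → b ∈ S) →
      (∃ m ∈ S, ∀ a ∈ S, m ≤ a) ∨ S = Set.univ)
    (μ₁ μ₂ : A → ℝ≥0∞) (h₁ : IsSubDist μ₁)
    (hw : ∑' a, μ₁ a = ∑' a, μ₂ a) :
    (∀ k : A, setSum μ₁ {a | k ≤ a} ≤ setSum μ₂ {a | k ≤ a}) ↔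
      ∃ μ : A × A → ℝ≥0∞, IsCoupling μ μ₁ μ₂ ∧
        {p | μ p ≠ 0} ⊆ {p : A × A | p.1 ≤ p.2} := by
  have hA : UpperSetsPrincipalOrUniv A := fun S hne hS =>
    (hmin S hne fun _ _ ha hab => hS hab ha).imp_left
      fun ⟨m, hm, hle⟩ => ⟨m, Subset.antisymm hle fun _ h => hS h hm⟩
  constructor
  · intro hdom
    have hup : ∀ V, IsUpperSet V → setSum μ₁ V ≤ setSum μ₂ V :=
      fun V hV => hA.setSum_le_of_isUpperSet hw hdom hV
    by_cases htot : ∀ x y : A, x ≤ y ∨ y ≤ x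
    · have : Std.Total (α := A) (· ≤ ·) := ⟨htot⟩
      exact exists_isCoupling_of_total (· ≤ ·) h₁ hw hup
    · push Not at htot
      obtain ⟨a, b, hab, hba⟩ := htot
      exact hA.exists_isCoupling_of_not_le hab hba h₁ hw hup
  · rintro ⟨μ, hμ, hsupp⟩ k
    exact (setSum_le_setSum_relImage hμ hsupp _).trans
      (setSum_mono μ₂ fun _ ⟨_, hx, hxy⟩ => le_trans hx hxy)

theorem stochastic_domination_iff {A : Type*} [Countable A] [Preorder A]
    (hmin : ∀ S : Set A, S.Nonempty → (∀ a b, a ∈ S → a ≤ b → b ∈ S) →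
      (∃ m ∈ S, ∀ a ∈ S, m ≤ a) ∨ S = Set.univ)
    (μ₁ μ₂ : A → ℝ≥0∞) (h₁ : IsSubDist μ₁) (h₂ : IsSubDist μ₂)
    (hw : ∑' a, μ₁ a = ∑' a, μ₂ a) :
    (∀ k : A, setSum μ₁ {a | k ≤ a} ≤ setSum μ₂ {a | k ≤ a}) ↔
      ∃ μ : A × A → ℝ≥0∞, IsCoupling μ μ₁ μ₂ ∧
        {p | μ p ≠ 0} ⊆ {p : A × A | p.1 ≤ p.2} :=
  stochastic_domination_iff_general hmin μ₁ μ₂ h₁ hw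
end
end

section
/- Let μ₁, μ₂ be sub-distributions over A₁, A₂ with S₁ ⊆ A₁ and S₂ ⊆ A₂. If there is an (ε,δ)-approximate lifting of the relation {(a₁,a₂) : a₁ ∈ S₁ → a₂ ∈ S₂} relating μ₁ and μ₂, then μ₁(S₁) ≤ e^ε · μ₂(S₂) + δ. -/
open scoped ENNReal

noncomputable section

lemma tsum_option_of_none_zero {A : Type*} (f : Option A → ℝ≥0∞) (h : f none = 0) :
    ∑' a, f (some a) = ∑' o, f o := by
  rw [← tsum_range f (Option.some_injective A)]
  apply tsum_subtype_eq_of_support_subset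
  intro o ho
  cases o with
  | none => exact absurd h ho
  | some a => exact ⟨a, rfl⟩

theorem alift_impl {A₁ A₂ : Type*} [Countable A₁] [Countable A₂]
    (μ₁ : A₁ → ℝ≥0∞) (μ₂ : A₂ → ℝ≥0∞) (S₁ : Set A₁) (S₂ : Set A₂)
    (h₁ : IsSubDist μ₁) (h₂ : IsSubDist μ₂) (ε δ : ℝ)
    (h : ApproxLift ε δ {p : A₁ × A₂ | p.1 ∈ S₁ → p.2 ∈ S₂} μ₁ μ₂) :
    setSum μ₁ S₁ ≤ ENNReal.ofReal (Real.exp ε) * setSum μ₂ S₂ +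
      ENNReal.ofReal δ := by
  obtain ⟨μL, μR, -, -, hL1, hL0, hR1, hR0, -, hsR, hdist⟩ := h
  set g : S₁ × Option A₂ → Option A₁ × Option A₂ := fun x => (some x.1.1, x.2) with hg
  have hginj : Function.Injective g := by
    intro x y hxy
    simp only [hg, Prod.mk.injEq, Option.some_inj] at hxy
    exact Prod.ext (Subtype.ext hxy.1) hxy.2
  -- left mass
  have hLeq : setSum μL (Set.range g) = setSum μ₁ S₁ := by
    rw [setSum, tsum_range μL hginj]
    refine (ENNReal.tsum_prod (f := fun (a : S₁) (o : Option A₂) => μL (some a.1, o))).trans ?_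
    simp only [hL1]
    rfl
  -- right mass
  have hReq : setSum μR (Set.range g) ≤ setSum μ₂ S₂ := by
    rw [setSum, tsum_range μR hginj]
    have step1 : ∀ a : S₁, ∑' o : Option A₂, μR (some a.1, o)
        = ∑' b : S₂, μR (some a.1, some b.1) := by
      intro a
      rw [← tsum_option_of_none_zero (fun o => μR (some a.1, o)) (hR0 _)]
      rw [show (fun b : A₂ => μR (some a.1, some b)) =
        fun b => S₂.indicator (fun b => μR (some a.1, some b)) b from ?_, ← tsum_subtype]
      funext b
      by_cases hb : b ∈ S₂
      · rw [Set.indicator_of_mem hb]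
      · rw [Set.indicator_of_notMem hb]
        by_contra hne
        exact hb (hsR hne a.2)
    calc ∑' x : S₁ × Option A₂, μR (g x)
        = ∑' (a : S₁) (o : Option A₂), μR (some a.1, o) :=
          ENNReal.tsum_prod (f := fun (a : S₁) (o : Option A₂) => μR (some a.1, o))
      _ = ∑' (a : S₁) (b : S₂), μR (some a.1, some b.1) := by
          exact tsum_congr step1
      _ = ∑' (b : S₂) (a : S₁), μR (some a.1, some b.1) := ENNReal.tsum_comm
      _ ≤ ∑' (b : S₂) (o : Option A₁), μR (o, some b.1) := by
          refine ENNReal.tsum_le_tsum fun b => ?_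
          exact ENNReal.tsum_comp_le_tsum_of_injective
            ((Option.some_injective A₁).comp Subtype.val_injective)
            (fun o => μR (o, some b.1))
      _ = ∑' b : S₂, μ₂ b.1 := by simp only [hR1]
      _ = setSum μ₂ S₂ := rfl
  calc setSum μ₁ S₁ = setSum μL (Set.range g) := hLeq.symm
    _ ≤ ENNReal.ofReal (Real.exp ε) * setSum μR (Set.range g) + ENNReal.ofReal δ :=
        hdist _
    _ ≤ ENNReal.ofReal (Real.exp ε) * setSum μ₂ S₂ + ENNReal.ofReal δ := by
        gcongr
end
end

section
/- (Approximate lifting implies Sato's condition.) Let μ₁, μ₂ be sub-distributions over A₁, A₂ and R ⊆ A₁ × A₂. If there exists an (ε,δ)-approximate lifting of R relating μ₁ and μ₂, then for every subset S₁ ⊆ A₁, μ₁(S₁) ≤ e^ε · μ₂(R(S₁)) + δ, where R(S₁) is the image of S₁ under R. -/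
/-! Lift `S₁` to `U = S₁ × A₂⋆`. The left marginal gives `μL(U) = μ₁(S₁)`, and the ε-distance
bound gives `μL(U) ≤ e^ε μR(U) + δ`. Since `μR` lives on `R⋆` and puts no mass on `⋆` in the second
coordinate, every pair it charges in `U` is some `(a₁, a₂) ∈ R` with `a₁ ∈ S₁`, so `μR(U)` is at most
the mass of `A₁⋆ × R(S₁)`, which is `μ₂(R(S₁))` by the right marginal. -/

open scoped ENNReal

noncomputable section

section setSum

variable {α β : Type*}

lemma setSum_eq_tsum_indicator_s15 (μ : α → ℝ≥0∞) (s : Set α) :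
    setSum μ s = ∑' a, s.indicator μ a :=
  tsum_subtype s μ

lemma setSum_mono_of_support {μ : α → ℝ≥0∞} {s t : Set α}
    (h : ∀ a ∈ s, μ a ≠ 0 → a ∈ t) : setSum μ s ≤ setSum μ t := by
  simp only [setSum_eq_tsum_indicator_s15]
  refine ENNReal.tsum_le_tsum fun a => ?_
  by_cases has : a ∈ s
  · by_cases hμ : μ a = 0
    · simp [has, hμ]
    · simp [has, h a has hμ]
  · simp [has]

lemma setSum_image_of_injective (μ : β → ℝ≥0∞) {f : α → β} (hf : Function.Injective f)
    (s : Set α) : setSum μ (f '' s) = setSum (μ ∘ f) s :=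
  tsum_image μ hf.injOn

lemma setSum_preimage_fst (μ : α × β → ℝ≥0∞) (s : Set α) :
    setSum μ (Prod.fst ⁻¹' s) = setSum (fun a => ∑' b, μ (a, b)) s := by
  simp only [setSum_eq_tsum_indicator_s15, ENNReal.tsum_prod' (f := (Prod.fst ⁻¹' s).indicator μ)]
  refine tsum_congr fun a => ?_
  by_cases ha : a ∈ s <;> simp [ha]

lemma setSum_preimage_snd (μ : α × β → ℝ≥0∞) (t : Set β) :
    setSum μ (Prod.snd ⁻¹' t) = setSum (fun b => ∑' a, μ (a, b)) t := by
  simp only [setSum_eq_tsum_indicator_s15, ENNReal.tsum_prod' (f := (Prod.snd ⁻¹' t).indicator μ),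
    ENNReal.tsum_comm (α := α)]
  refine tsum_congr fun b => ?_
  by_cases hb : b ∈ t <;> simp [hb]

end setSum

section marginals

variable {α β : Type*}

lemma setSum_preimage_fst_image_some {μ : Option α × β → ℝ≥0∞} {ν : α → ℝ≥0∞}
    (hμ : ∀ a, ∑' b, μ (some a, b) = ν a) (s : Set α) :
    setSum μ (Prod.fst ⁻¹' (some '' s)) = setSum ν s := by
  rw [setSum_preimage_fst, setSum_image_of_injective _ (Option.some_injective α)]
  simp only [Function.comp_def, hμ]

lemma setSum_preimage_snd_image_some {μ : α × Option β → ℝ≥0∞} {ν : β → ℝ≥0∞}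
    (hμ : ∀ b, ∑' a, μ (a, some b) = ν b) (t : Set β) :
    setSum μ (Prod.snd ⁻¹' (some '' t)) = setSum ν t := by
  rw [setSum_preimage_snd, setSum_image_of_injective _ (Option.some_injective β)]
  simp only [Function.comp_def, hμ]

end marginals

section starRel

variable {α β : Type*} {R : Set (α × β)}

lemma some_mem_image_relImage_of_mem_starRel {S : Set α} {a : α} {o : Option β}
    (hR : (some a, o) ∈ starRel R) (ha : a ∈ S) (ho : o ≠ none) :
    o ∈ some '' relImage R S := by
  cases o with
  | none => exact absurd rfl ho
  | some b => exact ⟨b, ⟨a, ha, hR⟩, rfl⟩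

lemma setSum_preimage_fst_le_setSum_preimage_snd_relImage {μ : Option α × Option β → ℝ≥0∞}
    (hsupp : {p | μ p ≠ 0} ⊆ starRel R) (hnone : ∀ o, μ (o, none) = 0) (S : Set α) :
    setSum μ (Prod.fst ⁻¹' (some '' S)) ≤ setSum μ (Prod.snd ⁻¹' (some '' relImage R S)) := by
  refine setSum_mono_of_support ?_
  rintro ⟨_, o⟩ ⟨a, ha, rfl⟩ hne
  exact some_mem_image_relImage_of_mem_starRel (hsupp hne) ha (by rintro rfl; exact hne (hnone _))

end starRel

theorem alift_to_sato_general {A₁ A₂ : Type*}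
    (μ₁ : A₁ → ℝ≥0∞) (μ₂ : A₂ → ℝ≥0∞)
    (R : Set (A₁ × A₂)) (ε δ : ℝ)
    (h : ApproxLift ε δ R μ₁ μ₂) :
    ∀ S₁ : Set A₁,
      setSum μ₁ S₁ ≤ ENNReal.ofReal (Real.exp ε) * setSum μ₂ (relImage R S₁) +
        ENNReal.ofReal δ := by
  intro S₁
  obtain ⟨μL, μR, -, -, hL, -, hR, hRnone, -, hRsupp, hdist⟩ := h
  calc setSum μ₁ S₁ = setSum μL (Prod.fst ⁻¹' (some '' S₁)) :=
        (setSum_preimage_fst_image_some hL S₁).symm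
    _ ≤ ENNReal.ofReal (Real.exp ε) * setSum μR (Prod.fst ⁻¹' (some '' S₁)) + ENNReal.ofReal δ :=
        hdist _
    _ ≤ ENNReal.ofReal (Real.exp ε) * setSum μR (Prod.snd ⁻¹' (some '' relImage R S₁)) +
          ENNReal.ofReal δ := by
        gcongr
        exact setSum_preimage_fst_le_setSum_preimage_snd_relImage hRsupp hRnone S₁
    _ = ENNReal.ofReal (Real.exp ε) * setSum μ₂ (relImage R S₁) + ENNReal.ofReal δ := by
        rw [setSum_preimage_snd_image_some hR]

theorem alift_to_sato {A₁ A₂ : Type*} [Countable A₁] [Countable A₂]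
    (μ₁ : A₁ → ℝ≥0∞) (μ₂ : A₂ → ℝ≥0∞)
    (h₁ : IsSubDist μ₁) (h₂ : IsSubDist μ₂)
    (R : Set (A₁ × A₂)) (ε δ : ℝ)
    (h : ApproxLift ε δ R μ₁ μ₂) :
    ∀ S₁ : Set A₁,
      setSum μ₁ S₁ ≤ ENNReal.ofReal (Real.exp ε) * setSum μ₂ (relImage R S₁) +
        ENNReal.ofReal δ :=
  alift_to_sato_general μ₁ μ₂ R ε δ h
end
end

section
/- (Approximate Strassen theorem, finite case.) Let μ₁, μ₂ be sub-distributions with finite support over A₁, A₂ and R ⊆ A₁ × A₂. If μ₁(S₁) ≤ e^ε · μ₂(R(S₁)) + δ for every S₁ ⊆ A₁, then there exists an (ε,δ)-approximate lifting of R relating μ₁ and μ₂. -/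
open scoped ENNReal

noncomputable section

/-!
Pad `A₂` with `⋆`, related to every point of `A₁`, and give `⋆` capacity `δ` and each `a₂`
capacity `e^ε μ₂(a₂)`. The hypothesis is then exactly Hall's condition for shipping `μ₁` into
these capacities along `R⋆`, so the weighted Hall theorem yields a transport `g`. Take `μL := g`,
and `μR := e^{-ε} g` on `R` with the unused part of `μ₂` placed on `{⋆} × A₂`: then `μL ≤ e^ε μR`
except on `A₁ × {⋆}`, which carries mass at most `δ`.

The weighted Hall theorem is proved by induction on the number of nonzero masses. Push as much
mass as Hall's condition allows along an edge `(a₀, b₀)`: either an endpoint is exhausted, or a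
set `T₀ ∌ a₀` becomes tight and the problem splits into `T₀ → N(T₀)` and its complement.
-/

open Finset
open scoped NNReal Classical

lemma sum_tsub_single_of_notMem {ι M : Type*} [AddCommMonoid M] [PartialOrder M] [Sub M]
    [OrderedSub M] {F : Finset ι} {f : ι → M} {i : ι} {c : M} (hi : i ∉ F) :
    ∑ x ∈ F, (f - (Pi.single i c : ι → M)) x = ∑ x ∈ F, f x :=
  sum_congr rfl fun x hx => by simp [Pi.single_eq_of_ne (ne_of_mem_of_not_mem hx hi)]

section CanonicallyOrdered

variable {ι κ M : Type*} [AddCommMonoid M] [PartialOrder M] [CanonicallyOrderedAdd M]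
  {F : Finset ι} {f g : ι → M} {i : ι} {c : M}

lemma Pi.single_le_of_le (hc : c ≤ f i) : Pi.single i c ≤ f := fun x => by
  rcases eq_or_ne x i with rfl | hx
  · simpa using hc
  · simp [hx]

section

variable [Sub M] [OrderedSub M]

lemma sum_tsub_single_add (hi : i ∈ F) (hc : c ≤ f i) :
    ∑ x ∈ F, (f - (Pi.single i c : ι → M)) x + c = ∑ x ∈ F, f x := by
  calc ∑ x ∈ F, (f - (Pi.single i c : ι → M)) x + c
      = ∑ x ∈ F, ((f - (Pi.single i c : ι → M)) x + (Pi.single i c : ι → M) x) := by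
        rw [sum_add_distrib, sum_pi_single', if_pos hi]
    _ = ∑ x ∈ F, f x := sum_congr rfl fun x _ => tsub_add_cancel_of_le (Pi.single_le_of_le hc x)

end

variable [DecidableEq M]

lemma filter_ne_zero_subset_of_le (h : f ≤ g) : {x ∈ F | f x ≠ 0} ⊆ {x ∈ F | g x ≠ 0} :=
  monotone_filter_right F fun x _ hf hg => hf (nonpos_iff_eq_zero.1 (hg ▸ h x))

lemma card_filter_ne_zero_le_of_le (h : f ≤ g) : #{x ∈ F | f x ≠ 0} ≤ #{x ∈ F | g x ≠ 0} :=
  card_le_card (filter_ne_zero_subset_of_le h)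

lemma card_filter_ne_zero_lt_of_le (h : f ≤ g) (hi : i ∈ F) (hf : f i = 0) (hg : g i ≠ 0) :
    #{x ∈ F | f x ≠ 0} < #{x ∈ F | g x ≠ 0} :=
  card_lt_card <| (ssubset_iff_of_subset (filter_ne_zero_subset_of_le h)).2
    ⟨i, mem_filter.2 ⟨hi, hg⟩, by simp [hf]⟩

lemma card_filter_ne_zero_add_lt {F' : Finset κ} {f' g' : κ → M} (h : f ≤ g) (h' : f' ≤ g')
    (hlt : (∃ i ∈ F, f i = 0 ∧ g i ≠ 0) ∨ ∃ j ∈ F', f' j = 0 ∧ g' j ≠ 0) :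
    #{x ∈ F | f x ≠ 0} + #{y ∈ F' | f' y ≠ 0} < #{x ∈ F | g x ≠ 0} + #{y ∈ F' | g' y ≠ 0} := by
  rcases hlt with ⟨i, hi, hf, hg⟩ | ⟨j, hj, hf, hg⟩
  · exact add_lt_add_of_lt_of_le (card_filter_ne_zero_lt_of_le h hi hf hg)
      (card_filter_ne_zero_le_of_le h')
  · exact add_lt_add_of_le_of_lt (card_filter_ne_zero_le_of_le h)
      (card_filter_ne_zero_lt_of_le h' hj hf hg)

end CanonicallyOrdered

section Transport

variable {α β : Type*}

def nbhd (r : Set (α × β)) (t : Finset β) (T : Finset α) : Finset β :=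
  {b ∈ t | b ∈ relImage r T}

def HallCondition (r : Set (α × β)) (s : Finset α) (t : Finset β) (u : α → ℝ≥0)
    (v : β → ℝ≥0) : Prop :=
  ∀ T ⊆ s, ∑ a ∈ T, u a ≤ ∑ b ∈ nbhd r t T, v b

structure IsTransport (r : Set (α × β)) (s : Finset α) (t : Finset β) (u : α → ℝ≥0)
    (v : β → ℝ≥0) (γ : α → β → ℝ≥0) : Prop where
  mem_of_ne_zero : ∀ a b, γ a b ≠ 0 → a ∈ s ∧ b ∈ t ∧ (a, b) ∈ r
  sum_row : ∀ a ∈ s, ∑ b ∈ t, γ a b = u a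
  sum_col_le : ∀ b ∈ t, ∑ a ∈ s, γ a b ≤ v b

variable {r : Set (α × β)} {s T T₀ : Finset α} {t : Finset β} {u u₁ u₂ : α → ℝ≥0}
  {v v₁ v₂ : β → ℝ≥0} {γ γ₁ γ₂ : α → β → ℝ≥0} {a₀ : α} {b₀ : β} {c : ℝ≥0}

lemma mem_nbhd {b : β} : b ∈ nbhd r t T ↔ b ∈ t ∧ ∃ a ∈ T, (a, b) ∈ r := by
  simp [nbhd, relImage]

lemma nbhd_mono {T' : Finset α} (h : T ⊆ T') : nbhd r t T ⊆ nbhd r t T' := fun b hb => by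
  obtain ⟨hbt, a, ha, hab⟩ := mem_nbhd.1 hb
  exact mem_nbhd.2 ⟨hbt, a, h ha, hab⟩

lemma nbhd_union (T T' : Finset α) : nbhd r t (T ∪ T') = nbhd r t T ∪ nbhd r t T' := by
  ext b
  simp only [mem_nbhd, mem_union]
  grind

namespace IsTransport

lemma zero (hu : ∀ a ∈ s, u a = 0) : IsTransport r s t u v 0 where
  mem_of_ne_zero a b h := absurd rfl h
  sum_row a ha := by simp [hu a ha]
  sum_col_le b _ := by simp

lemma add (h₁ : IsTransport r s t u₁ v₁ γ₁) (h₂ : IsTransport r s t u₂ v₂ γ₂) :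
    IsTransport r s t (u₁ + u₂) (v₁ + v₂) (γ₁ + γ₂) where
  mem_of_ne_zero a b h := by
    by_cases h0 : γ₁ a b = 0
    · exact h₂.mem_of_ne_zero a b (by simpa [h0] using h)
    · exact h₁.mem_of_ne_zero a b h0
  sum_row a ha := by simp [sum_add_distrib, h₁.sum_row a ha, h₂.sum_row a ha]
  sum_col_le b hb := by
    simpa [sum_add_distrib] using add_le_add (h₁.sum_col_le b hb) (h₂.sum_col_le b hb)

lemma single (ha : a₀ ∈ s) (hb : b₀ ∈ t) (hr : (a₀, b₀) ∈ r) (c : ℝ≥0) :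
    IsTransport r s t (Pi.single a₀ c) (Pi.single b₀ c) (Pi.single a₀ (Pi.single b₀ c)) where
  mem_of_ne_zero a b h := by
    obtain rfl : a = a₀ := by by_contra hne; simp [hne] at h
    obtain rfl : b = b₀ := by by_contra hne; simp [hne] at h
    exact ⟨ha, hb, hr⟩
  sum_row a _ := by
    rcases eq_or_ne a a₀ with rfl | hne
    · simp [hb]
    · simp [hne]
  sum_col_le b _ := by rw [← Finset.sum_apply, sum_pi_single', if_pos ha]

lemma of_tsub_single
    (hγ : IsTransport r s t (u - Pi.single a₀ c) (v - Pi.single b₀ c) γ)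
    (ha : a₀ ∈ s) (hb : b₀ ∈ t) (hr : (a₀, b₀) ∈ r) (hcu : c ≤ u a₀) (hcv : c ≤ v b₀) :
    IsTransport r s t u v (γ + Pi.single a₀ (Pi.single b₀ c)) := by
  have := hγ.add (single ha hb hr c)
  rwa [tsub_add_cancel_of_le (Pi.single_le_of_le hcu),
    tsub_add_cancel_of_le (Pi.single_le_of_le hcv)] at this

end IsTransport

namespace HallCondition

lemma exists_partner (h : HallCondition r s t u v) (ha : a₀ ∈ s) (hu : u a₀ ≠ 0) :
    ∃ b₀ ∈ t, (a₀, b₀) ∈ r ∧ v b₀ ≠ 0 := by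
  have hsum : ∑ b ∈ nbhd r t {a₀}, v b ≠ 0 := by
    have := h {a₀} (singleton_subset_iff.2 ha)
    rw [sum_singleton] at this
    exact ((pos_iff_ne_zero.2 hu).trans_le this).ne'
  obtain ⟨b₀, hb, hvb⟩ := exists_ne_zero_of_sum_ne_zero hsum
  obtain ⟨hbt, a, ha', hr⟩ := mem_nbhd.1 hb
  rw [mem_singleton.1 ha'] at hr
  exact ⟨b₀, hbt, hr, hvb⟩

/-- `c` is the largest amount that can be pushed along `(a₀, b₀)` without breaking Hall's
condition, so one of the constraints on it is tight. -/
lemma exists_push_amount (h : HallCondition r s t u v) (a₀ : α) (b₀ : β) :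
    ∃ c ≤ u a₀, c ≤ v b₀ ∧
      (∀ T ⊆ s, a₀ ∉ T → b₀ ∈ nbhd r t T → ∑ a ∈ T, u a + c ≤ ∑ b ∈ nbhd r t T, v b) ∧
      (c = u a₀ ∨ c = v b₀ ∨ ∃ T₀ ⊆ s, a₀ ∉ T₀ ∧ b₀ ∈ nbhd r t T₀ ∧
        ∑ a ∈ T₀, u a + c = ∑ b ∈ nbhd r t T₀, v b) := by
  set C := {T ∈ s.powerset | a₀ ∉ T ∧ b₀ ∈ nbhd r t T}
  set slack := fun T => ∑ b ∈ nbhd r t T, v b - ∑ a ∈ T, u a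
  have hslack (T) (hT : T ⊆ s) : ∑ a ∈ T, u a + slack T = ∑ b ∈ nbhd r t T, v b :=
    add_tsub_cancel_of_le (h T hT)
  set X := insert (min (u a₀) (v b₀)) (C.image slack)
  have hX : X.Nonempty := insert_nonempty _ _
  have hmin : X.min' hX ≤ min (u a₀) (v b₀) := min'_le _ _ (mem_insert_self _ _)
  refine ⟨X.min' hX, hmin.trans (min_le_left _ _), hmin.trans (min_le_right _ _),
    fun T hT ha hb => ?_, ?_⟩
  · calc ∑ a ∈ T, u a + X.min' hX ≤ ∑ a ∈ T, u a + slack T := by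
          gcongr
          exact min'_le _ _ (mem_insert_of_mem (mem_image_of_mem _
            (mem_filter.2 ⟨mem_powerset.2 hT, ha, hb⟩)))
      _ = _ := hslack T hT
  · rcases mem_insert.1 (min'_mem X hX) with hc | hc
    · rcases min_choice (u a₀) (v b₀) with h' | h'
      · exact Or.inl (hc.trans h')
      · exact Or.inr (Or.inl (hc.trans h'))
    · obtain ⟨T₀, hT₀, hc⟩ := mem_image.1 hc
      obtain ⟨hT₀s, ha, hb⟩ := mem_filter.1 hT₀
      exact Or.inr (Or.inr ⟨T₀, mem_powerset.1 hT₀s, ha, hb, hc ▸ hslack T₀ (mem_powerset.1 hT₀s)⟩)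

lemma tsub_single (h : HallCondition r s t u v) (hb : b₀ ∈ t) (hr : (a₀, b₀) ∈ r)
    (hcu : c ≤ u a₀) (hcv : c ≤ v b₀)
    (hslack : ∀ T ⊆ s, a₀ ∉ T → b₀ ∈ nbhd r t T → ∑ a ∈ T, u a + c ≤ ∑ b ∈ nbhd r t T, v b) :
    HallCondition r s t (u - Pi.single a₀ c) (v - Pi.single b₀ c) := by
  intro T hT
  by_cases hbT : b₀ ∈ nbhd r t T
  · rw [← add_le_add_iff_right c, sum_tsub_single_add hbT hcv]
    by_cases haT : a₀ ∈ T
    · rw [sum_tsub_single_add haT hcu]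
      exact h T hT
    · rw [sum_tsub_single_of_notMem haT]
      exact hslack T hT haT hbT
  · have haT : a₀ ∉ T := fun ha => hbT (mem_nbhd.2 ⟨hb, a₀, ha, hr⟩)
    rw [sum_tsub_single_of_notMem haT, sum_tsub_single_of_notMem hbT]
    exact h T hT

lemma indicator (h : HallCondition r s t u v) (T₀ : Finset α) :
    HallCondition r s t ((T₀ : Set α).indicator u) ((nbhd r t T₀ : Set β).indicator v) := by
  intro T hT
  simp only [Set.indicator_apply, mem_coe]
  rw [← sum_filter, ← sum_filter]
  calc ∑ a ∈ T with a ∈ T₀, u a ≤ ∑ b ∈ nbhd r t {a ∈ T | a ∈ T₀}, v b :=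
        h _ ((filter_subset _ _).trans hT)
    _ ≤ _ := sum_le_sum_of_subset fun b hb => mem_filter.2
        ⟨nbhd_mono (filter_subset _ _) hb, nbhd_mono (fun a ha => (mem_filter.1 ha).2) hb⟩

lemma indicator_compl (h : HallCondition r s t u v) (hT₀ : T₀ ⊆ s)
    (htight : ∑ a ∈ T₀, u a = ∑ b ∈ nbhd r t T₀, v b) :
    HallCondition r s t ((T₀ : Set α)ᶜ.indicator u) ((nbhd r t T₀ : Set β)ᶜ.indicator v) := by
  intro T hT
  simp only [Set.indicator_apply, Set.mem_compl_iff, mem_coe]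
  rw [← sum_filter, ← sum_filter, filter_notMem_eq_sdiff, filter_notMem_eq_sdiff,
    ← add_le_add_iff_right (∑ a ∈ T₀, u a)]
  have := h (T ∪ T₀) (union_subset hT hT₀)
  rwa [nbhd_union, ← sum_sdiff (subset_union_right (s₁ := T)), union_sdiff_right,
    ← sum_sdiff (subset_union_right (s₁ := nbhd r t T)), union_sdiff_right, ← htight] at this

theorem exists_isTransport (h : HallCondition r s t u v) : ∃ γ, IsTransport r s t u v γ := by
  generalize hn : #{a ∈ s | u a ≠ 0} + #{b ∈ t | v b ≠ 0} = n
  induction n using Nat.strong_induction_on generalizing u v with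
  | _ n ih =>
  by_cases hu : ∀ a ∈ s, u a = 0
  · exact ⟨0, .zero hu⟩
  push Not at hu
  obtain ⟨a₀, ha₀, hua₀⟩ := hu
  obtain ⟨b₀, hb₀, hr, hvb₀⟩ := h.exists_partner ha₀ hua₀
  obtain ⟨c, hcu, hcv, hslack, hc⟩ := h.exists_push_amount a₀ b₀
  set u' := u - Pi.single a₀ c
  set v' := v - Pi.single b₀ c
  have h' : HallCondition r s t u' v' := h.tsub_single hb₀ hr hcu hcv hslack
  suffices ∃ γ', IsTransport r s t u' v' γ' by
    obtain ⟨γ', hγ'⟩ := this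
    exact ⟨_, hγ'.of_tsub_single ha₀ hb₀ hr hcu hcv⟩
  have hle : #{a ∈ s | u' a ≠ 0} + #{b ∈ t | v' b ≠ 0} ≤ n :=
    hn ▸ add_le_add (card_filter_ne_zero_le_of_le (f := u') tsub_le_self)
      (card_filter_ne_zero_le_of_le (f := v') tsub_le_self)
  by_cases hdone : u' a₀ = 0 ∨ v' b₀ = 0
  · exact ih _ (hn ▸ card_filter_ne_zero_add_lt tsub_le_self tsub_le_self
      (hdone.imp (fun h0 => ⟨a₀, ha₀, h0, hua₀⟩) fun h0 => ⟨b₀, hb₀, h0, hvb₀⟩)) h' rfl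
  push Not at hdone
  obtain ⟨T₀, hT₀s, ha₀T₀, hb₀T₀, htight⟩ :=
    (hc.resolve_left fun h => hdone.1 (by simp [u', h])).resolve_left
      fun h => hdone.2 (by simp [v', h])
  have htight' : ∑ a ∈ T₀, u' a = ∑ b ∈ nbhd r t T₀, v' b := by
    rw [← add_left_inj c, sum_tsub_single_add hb₀T₀ hcv, sum_tsub_single_of_notMem ha₀T₀, htight]
  obtain ⟨γ₁, hγ₁⟩ := ih _ ((card_filter_ne_zero_add_lt (Set.indicator_le_self _ _)
    (Set.indicator_le_self _ _) (.inl ⟨a₀, ha₀, by simp [ha₀T₀], hdone.1⟩)).trans_le hle)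
    (h'.indicator T₀) rfl
  obtain ⟨γ₂, hγ₂⟩ := ih _ ((card_filter_ne_zero_add_lt (Set.indicator_le_self _ _)
    (Set.indicator_le_self _ _) (.inr ⟨b₀, hb₀, by simp [hb₀T₀], hdone.2⟩)).trans_le hle)
    (h'.indicator_compl hT₀s htight') rfl
  exact ⟨γ₁ + γ₂, by simpa only [Set.indicator_self_add_compl] using hγ₁.add hγ₂⟩

end HallCondition

end Transport

section Lifting

variable {α β : Type*}

lemma IsSubDist.apply_ne_top {μ : α → ℝ≥0∞} (hμ : IsSubDist μ) (a : α) : μ a ≠ ∞ :=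
  ne_top_of_le_ne_top ENNReal.one_ne_top ((ENNReal.le_tsum a).trans hμ)

lemma setSum_coe_finset (μ : α → ℝ≥0∞) (T : Finset α) : setSum μ T = ∑ a ∈ T, μ a :=
  Finset.tsum_subtype T μ

lemma setSum_eq_sum_filter {μ : α → ℝ≥0∞} {F : Finset α} (hF : Function.support μ ⊆ F)
    (X : Set α) : setSum μ X = ∑ a ∈ F with a ∈ X, μ a := by
  rw [setSum, _root_.tsum_subtype, sum_filter,
    tsum_eq_sum fun a ha => Set.indicator_apply_eq_zero.2 fun _ => by_contra fun h => ha (hF h)]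
  rfl

lemma ENNReal.tsum_option (f : Option α → ℝ≥0∞) : ∑' o, f o = f none + ∑' a, f (some a) := by
  rw [ENNReal.tsum_eq_add_tsum_ite none, ← (Option.some_injective α).tsum_eq]
  · simp
  · rintro (_ | a) ho
    · simp at ho
    · exact ⟨a, rfl⟩

lemma setSum_option (f : Option α → ℝ≥0∞) (X : Set (Option α)) :
    setSum f X = X.indicator f none + setSum (fun a => f (some a)) (some ⁻¹' X) := by
  rw [setSum, setSum, _root_.tsum_subtype, _root_.tsum_subtype (some ⁻¹' X) (fun a => f (some a)),
    ENNReal.tsum_option]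
  rfl

theorem exists_transport_of_setSum_le {r : Set (α × β)} {u : α → ℝ≥0∞} {v : β → ℝ≥0∞}
    (hu : (Function.support u).Finite) (hv : (Function.support v).Finite)
    (hu_top : ∀ a, u a ≠ ∞) (hv_top : ∀ b, v b ≠ ∞)
    (hall : ∀ S, setSum u S ≤ setSum v (relImage r S)) :
    ∃ g : α → β → ℝ≥0∞, (∀ a b, g a b ≠ 0 → (a, b) ∈ r) ∧ (∀ a, ∑' b, g a b = u a) ∧
      ∀ b, ∑' a, g a b ≤ v b := by
  set s := hu.toFinset
  set t := hv.toFinset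
  have hall' : HallCondition r s t (fun a => (u a).toNNReal) (fun b => (v b).toNNReal) := by
    intro T _
    rw [← ENNReal.coe_le_coe, ENNReal.ofNNReal_finsetSum, ENNReal.ofNNReal_finsetSum]
    simp only [ENNReal.coe_toNNReal, hu_top, hv_top, ne_eq, not_false_eq_true]
    rw [← setSum_coe_finset, nbhd, ← setSum_eq_sum_filter (by simp [t])]
    exact hall T
  obtain ⟨γ, hγ⟩ := hall'.exists_isTransport
  have hzero (a b) (h : ¬(a ∈ s ∧ b ∈ t)) : γ a b = 0 :=
    by_contra fun h' => h ⟨(hγ.mem_of_ne_zero a b h').1, (hγ.mem_of_ne_zero a b h').2.1⟩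
  refine ⟨fun a b => γ a b, fun a b h => (hγ.mem_of_ne_zero a b (ENNReal.coe_ne_zero.1 h)).2.2,
    fun a => ?_, fun b => ?_⟩
  · rw [tsum_eq_sum (s := t) fun b hb => by simp [hzero a b (by tauto)],
      ← ENNReal.ofNNReal_finsetSum]
    by_cases ha : a ∈ s
    · rw [hγ.sum_row a ha, ENNReal.coe_toNNReal (hu_top a)]
    · have : u a = 0 := by simpa [s] using ha
      rw [sum_eq_zero fun b _ => hzero a b (by tauto), this, ENNReal.coe_zero]
  · rw [tsum_eq_sum (s := s) fun a ha => by simp [hzero a b (by tauto)],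
      ← ENNReal.ofNNReal_finsetSum]
    by_cases hb : b ∈ t
    · exact (ENNReal.coe_le_coe.2 (hγ.sum_col_le b hb)).trans ENNReal.coe_toNNReal_le_self
    · simp [sum_eq_zero fun a _ => hzero a b (by tauto)]

end Lifting

section Witness

variable {α β : Type*}

def leftWitness (g : α → Option β → ℝ≥0∞) : Option α × Option β → ℝ≥0∞
  | (some a, o) => g a o
  | (none, _) => 0

def rightWitness (μ : β → ℝ≥0∞) (ν : α → β → ℝ≥0∞) : Option α × Option β → ℝ≥0∞
  | (some a, some b) => ν a b
  | (none, some b) => μ b - ∑' a, ν a b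
  | (_, none) => 0

lemma tsum_leftWitness (g : α → Option β → ℝ≥0∞) :
    ∑' p, leftWitness g p = ∑' a, ∑' o, g a o := by
  rw [ENNReal.tsum_prod', ENNReal.tsum_option]
  simp [leftWitness]

lemma tsum_rightWitness_some {μ : β → ℝ≥0∞} {ν : α → β → ℝ≥0∞} {b : β}
    (hν : ∑' a, ν a b ≤ μ b) : ∑' o, rightWitness μ ν (o, some b) = μ b := by
  rw [ENNReal.tsum_option]
  exact tsub_add_cancel_of_le hν

lemma rightWitness_none (μ : β → ℝ≥0∞) (ν : α → β → ℝ≥0∞) (o : Option α) :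
    rightWitness μ ν (o, none) = 0 := by
  cases o <;> rfl

lemma tsum_rightWitness {μ : β → ℝ≥0∞} {ν : α → β → ℝ≥0∞} (hν : ∀ b, ∑' a, ν a b ≤ μ b) :
    ∑' p, rightWitness μ ν p = ∑' b, μ b := by
  rw [ENNReal.tsum_prod', ENNReal.tsum_comm, ENNReal.tsum_option,
    tsum_congr fun b => tsum_rightWitness_some (hν b)]
  simp [rightWitness_none]

lemma setSum_leftWitness_le {g : α → Option β → ℝ≥0∞} {μ : β → ℝ≥0∞} {K κ c : ℝ≥0∞}
    (hKκ : K * κ = 1) (hnone : ∑' a, g a none ≤ c) (S : Set (Option α × Option β)) :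
    setSum (leftWitness g) S ≤
      K * setSum (rightWitness μ fun a b => κ * g a (some b)) S + c := by
  set E := {p : Option α × Option β | p.2 = none}.indicator (leftWitness g)
  have hpt (p) : leftWitness g p ≤ K * rightWitness μ (fun a b => κ * g a (some b)) p + E p := by
    rcases p with ⟨_ | a, _ | b⟩
    · simp [leftWitness]
    · simp [E, leftWitness]
    · simp [E, leftWitness, rightWitness]
    · simp [E, leftWitness, rightWitness, ← mul_assoc, hKκ]
  have hE : ∑' p, E p ≤ c := by
    rw [ENNReal.tsum_prod', ENNReal.tsum_option]
    simpa [E, leftWitness, ENNReal.tsum_option] using hnone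
  calc setSum (leftWitness g) S
      ≤ setSum (fun p => K * rightWitness μ (fun a b => κ * g a (some b)) p + E p) S :=
        ENNReal.tsum_le_tsum fun p => hpt p
    _ = K * setSum (rightWitness μ fun a b => κ * g a (some b)) S + setSum E S := by
        simp only [setSum, ENNReal.tsum_add, ENNReal.tsum_mul_left]
    _ ≤ K * setSum (rightWitness μ fun a b => κ * g a (some b)) S + c := by
        gcongr
        exact (ENNReal.tsum_comp_le_tsum_of_injective Subtype.val_injective E).trans hE

end Witness

theorem approxLift_of_transport {A₁ A₂ : Type*} {μ₁ : A₁ → ℝ≥0∞} {μ₂ : A₂ → ℝ≥0∞}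
    {R : Set (A₁ × A₂)} {ε δ : ℝ} (h₁ : IsSubDist μ₁) (h₂ : IsSubDist μ₂)
    (g : A₁ → Option A₂ → ℝ≥0∞) (hg : ∀ a o, g a o ≠ 0 → (some a, o) ∈ starRel R)
    (hrow : ∀ a, ∑' o, g a o = μ₁ a)
    (hcol : ∀ b, ∑' a, g a (some b) ≤ ENNReal.ofReal (Real.exp ε) * μ₂ b)
    (hnone : ∑' a, g a none ≤ ENNReal.ofReal δ) :
    ApproxLift ε δ R μ₁ μ₂ := by
  set K := ENNReal.ofReal (Real.exp ε)
  set κ := ENNReal.ofReal (Real.exp (-ε))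
  have hKκ : K * κ = 1 := by
    rw [← ENNReal.ofReal_mul (Real.exp_nonneg _), ← Real.exp_add, add_neg_cancel, Real.exp_zero,
      ENNReal.ofReal_one]
  set ν := fun a b => κ * g a (some b)
  have hν (b) : ∑' a, ν a b ≤ μ₂ b := by
    calc ∑' a, ν a b = κ * ∑' a, g a (some b) := ENNReal.tsum_mul_left
      _ ≤ κ * (K * μ₂ b) := by gcongr; exact hcol b
      _ = μ₂ b := by rw [← mul_assoc, mul_comm κ, hKκ, one_mul]
  refine ⟨leftWitness g, rightWitness μ₂ ν, ?_, ?_, hrow, fun _ => rfl,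
    fun b => tsum_rightWitness_some (hν b), rightWitness_none μ₂ ν, ?_, ?_,
    setSum_leftWitness_le hKκ hnone⟩
  · rw [IsSubDist, tsum_leftWitness, tsum_congr hrow]
    exact h₁
  · rw [IsSubDist, tsum_rightWitness hν]
    exact h₂
  · rintro ⟨_ | a, o⟩ hp
    · exact absurd rfl hp
    · exact hg a o hp
  · rintro ⟨_ | a, _ | b⟩ hp
    · exact absurd rfl hp
    · trivial
    · exact absurd rfl hp
    · exact hg a (some b) (right_ne_zero_of_mul hp)

theorem sato_to_alift_finite_general {A₁ A₂ : Type*}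
    (μ₁ : A₁ → ℝ≥0∞) (μ₂ : A₂ → ℝ≥0∞)
    (h₁ : IsSubDist μ₁) (h₂ : IsSubDist μ₂)
    (hfin₁ : (Function.support μ₁).Finite) (hfin₂ : (Function.support μ₂).Finite)
    (R : Set (A₁ × A₂)) (ε δ : ℝ)
    (h : ∀ S₁ : Set A₁,
      setSum μ₁ S₁ ≤ ENNReal.ofReal (Real.exp ε) * setSum μ₂ (relImage R S₁) +
        ENNReal.ofReal δ) :
    ApproxLift ε δ R μ₁ μ₂ := by
  set v : Option A₂ → ℝ≥0∞ :=
    fun o => o.elim (ENNReal.ofReal δ) fun b => ENNReal.ofReal (Real.exp ε) * μ₂ b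
  set r : Set (A₁ × Option A₂) := {p | (some p.1, p.2) ∈ starRel R}
  have hv : (Function.support v).Finite := by
    refine ((hfin₂.image some).insert none).subset ?_
    rintro (_ | b) hb
    · exact Set.mem_insert _ _
    · exact Set.mem_insert_of_mem _ ⟨b, right_ne_zero_of_mul hb, rfl⟩
  have hall (S : Set A₁) : setSum μ₁ S ≤ setSum v (relImage r S) := by
    rcases S.eq_empty_or_nonempty with rfl | ⟨a, ha⟩
    · simp [setSum]
    rw [setSum_option, Set.indicator_of_mem (show none ∈ relImage r S from ⟨a, ha, trivial⟩)]
    calc setSum μ₁ S ≤ _ := h S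
      -- `some ⁻¹' relImage r S` unfolds to `relImage R S`
      _ = _ := by rw [add_comm, setSum, ← ENNReal.tsum_mul_left]; rfl
  have hv_top (o : Option A₂) : v o ≠ ∞ := by
    cases o
    · exact ENNReal.ofReal_ne_top
    · exact ENNReal.mul_ne_top ENNReal.ofReal_ne_top (h₂.apply_ne_top _)
  obtain ⟨g, hg, hrow, hcol⟩ := exists_transport_of_setSum_le hfin₁ hv h₁.apply_ne_top hv_top hall
  exact approxLift_of_transport h₁ h₂ g hg hrow (fun b => hcol (some b)) (hcol none)

theorem sato_to_alift_finite {A₁ A₂ : Type*}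
    (μ₁ : A₁ → ℝ≥0∞) (μ₂ : A₂ → ℝ≥0∞)
    (h₁ : IsSubDist μ₁) (h₂ : IsSubDist μ₂)
    (hfin₁ : (Function.support μ₁).Finite) (hfin₂ : (Function.support μ₂).Finite)
    (R : Set (A₁ × A₂)) (ε δ : ℝ) (hδ : 0 ≤ δ)
    (h : ∀ S₁ : Set A₁,
      setSum μ₁ S₁ ≤ ENNReal.ofReal (Real.exp ε) * setSum μ₂ (relImage R S₁) +
        ENNReal.ofReal δ) :
    ApproxLift ε δ R μ₁ μ₂ :=
  sato_to_alift_finite_general μ₁ μ₂ h₁ h₂ hfin₁ hfin₂ R ε δ h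
end
end
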